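/- For an n×n circulant matrix whose first row corresponds to the polynomial p(x) = 1 + x − x², the determinant equals the product of p(ω) over all n-th roots of unity ω, and this product equals ±(Lₙ − 1 − (−1)ⁿ) up to sign, where Lₙ is the n-th Lucas number. -/

import Mathlib

/-- Lucas numbers: L₀ = 2, L₁ = 1, L_{n+2} = L_{n+1} + Lₙ. -/
def lucas : ℕ → ℤ
  | 0 => 2
  | 1 => 1
  | n + 2 => lucas (n + 1) + lucas n

/-- Coefficients of the polynomial p(x) = 1 + x − x² as a function on Fin n. -/
def pCoeff (n : ℕ) [NeZero n] : Fin n → ℤ := fun k =>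
  if (k : ℕ) = 0 then 1 else if (k : ℕ) = 1 then 1 else if (k : ℕ) = 2 then -1 else 0

/-- The n×n circulant matrix whose (i,j)-entry is the coefficient of
x^{(j−i) mod n} in p(x) = 1 + x − x². -/
def circMat (n : ℕ) [NeZero n] : Matrix (Fin n) (Fin n) ℤ :=
  fun i j => pCoeff n (j - i)
/-!
The vector `(x ^ j)_j`, for `x` an `n`-th root of unity, is an eigenvector of every circulant
matrix, with eigenvalue `∑ v m * x ^ m`; for `x = ζ ^ k`, `ζ` primitive, these eigenvectors
form an invertible Vandermonde matrix, so the determinant is the product of the eigenvalues.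
Factoring `1 + X - X² = -(φ - X)(ψ - X)` with `φ + ψ = 1`, `φψ = -1` and using
`∏_ω (c - ω) = c ^ n - 1`, the product becomes `(-1)ⁿ (φⁿ - 1)(ψⁿ - 1)`, and `φⁿ + ψⁿ = Lₙ`.
-/

open Matrix Finset

theorem Matrix.transpose_circulant_mulVec_pow {R : Type*} [CommRing R] {n : ℕ} [NeZero n]
    (v : Fin n → R) {x : R} (hx : x ^ n = 1) :
    (circulant v)ᵀ *ᵥ (fun j : Fin n => x ^ (j : ℕ)) =
      (∑ m, v m * x ^ (m : ℕ)) • fun j : Fin n => x ^ (j : ℕ) := by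
  ext i
  have hshift (m : Fin n) : x ^ ((m + i : Fin n) : ℕ) = x ^ (m : ℕ) * x ^ (i : ℕ) := by
    rw [Fin.val_add, ← pow_eq_pow_mod _ hx, pow_add]
  simp only [mulVec, dotProduct, transpose_apply, circulant_apply, Pi.smul_apply, smul_eq_mul,
    sum_mul]
  exact Fintype.sum_equiv (Equiv.subRight i) _ _ fun j => by
    rw [Equiv.subRight_apply, mul_assoc, ← hshift, sub_add_cancel]

theorem Matrix.det_circulant_eq_prod {R : Type*} [CommRing R] [IsDomain R] {n : ℕ} [NeZero n]
    (v : Fin n → R) {ζ : R} (hζ : IsPrimitiveRoot ζ n) :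
    (circulant v).det = ∏ k : Fin n, ∑ m : Fin n, v m * (ζ ^ (k : ℕ)) ^ (m : ℕ) := by
  set W : Matrix (Fin n) (Fin n) R := of fun j k => (ζ ^ (k : ℕ)) ^ (j : ℕ)
  have hW : W.det ≠ 0 := by
    rw [show W = (vandermonde fun k : Fin n => ζ ^ (k : ℕ))ᵀ from rfl, det_transpose,
      det_vandermonde_ne_zero_iff]
    exact fun a b hab => Fin.ext (hζ.pow_inj a.2 b.2 hab)
  have heig : (circulant v)ᵀ * W =
      W * diagonal fun k : Fin n => ∑ m : Fin n, v m * (ζ ^ (k : ℕ)) ^ (m : ℕ) := by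
    ext j k
    have hx : (ζ ^ (k : ℕ)) ^ n = 1 := by
      rw [← pow_mul, mul_comm, pow_mul, hζ.pow_eq_one, one_pow]
    rw [mul_diagonal]
    simpa [mul_apply, mulVec, dotProduct, W, mul_comm] using
      congrFun (transpose_circulant_mulVec_pow v hx) j
  have hdet := congrArg det heig
  rw [det_mul, det_mul, det_diagonal, det_transpose, mul_comm] at hdet
  exact mul_left_cancel₀ hW hdet

theorem IsPrimitiveRoot.prod_sub_pow {R : Type*} [CommRing R] [IsDomain R] {n : ℕ} [NeZero n]
    {ζ : R} (hζ : IsPrimitiveRoot ζ n) (c : R) :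
    ∏ k : Fin n, (c - ζ ^ (k : ℕ)) = c ^ n - 1 := by
  simpa [Fin.prod_univ_eq_prod_range (fun k => c - ζ ^ k), Polynomial.eval_prod] using
    (congrArg (Polynomial.eval c) (X_pow_sub_C_eq_prod hζ (NeZero.pos n) (one_pow n))).symm

theorem lucas_eq_pow_add_pow {R : Type*} [CommRing R] {a b : R} (hsum : a + b = 1)
    (hprod : a * b = -1) : ∀ m : ℕ, (lucas m : R) = a ^ m + b ^ m
  | 0 => by norm_num [lucas]
  | 1 => by simp [lucas, hsum]
  | m + 2 => by
    rw [lucas, Int.cast_add, lucas_eq_pow_add_pow hsum hprod (m + 1),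
      lucas_eq_pow_add_pow hsum hprod m]
    linear_combination -(a ^ (m + 1) + b ^ (m + 1)) * hsum + (a ^ m + b ^ m) * hprod

theorem sum_pCoeff_mul_pow {R : Type*} [CommRing R] {n : ℕ} [NeZero n] (hn : 3 ≤ n) (x : R) :
    ∑ m : Fin n, (pCoeff n m : R) * x ^ (m : ℕ) = 1 + x - x ^ 2 := by
  obtain ⟨k, rfl⟩ : ∃ k, n = k + 3 := ⟨n - 3, by omega⟩
  simp [Fin.sum_univ_succ, pCoeff, sub_eq_add_neg, add_assoc]

theorem IsPrimitiveRoot.prod_one_add_sub_sq {R : Type*} [CommRing R] [IsDomain R] {n : ℕ}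
    [NeZero n] {ζ : R} (hζ : IsPrimitiveRoot ζ n) {a b : R} (hsum : a + b = 1)
    (hprod : a * b = -1) :
    ∏ k : Fin n, (1 + ζ ^ (k : ℕ) - (ζ ^ (k : ℕ)) ^ 2) =
      -(-1) ^ n * ((lucas n : R) - 1 - (-1) ^ n) := by
  have hfactor (z : R) : 1 + z - z ^ 2 = -1 * ((a - z) * (b - z)) := by
    linear_combination (-z) * hsum + hprod
  simp only [hfactor, prod_mul_distrib, prod_const, card_univ, Fintype.card_fin,
    hζ.prod_sub_pow, lucas_eq_pow_add_pow hsum hprod]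
  have hpow : (a * b) ^ n = (-1) ^ n := by rw [hprod]
  linear_combination (-1) ^ n * hpow

theorem circMat_eq_transpose_circulant (n : ℕ) [NeZero n] :
    circMat n = (circulant (pCoeff n))ᵀ :=
  rfl

theorem circMat_det_eq_prod {n : ℕ} [NeZero n] (hn : 3 ≤ n) {ζ : ℂ} (hζ : IsPrimitiveRoot ζ n) :
    ((circMat n).det : ℂ) = ∏ k : Fin n, (1 + ζ ^ (k : ℕ) - (ζ ^ (k : ℕ)) ^ 2) := by
  rw [Int.cast_det, circMat_eq_transpose_circulant, transpose_map, det_transpose, map_circulant,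
    det_circulant_eq_prod _ hζ]
  simp only [sum_pCoeff_mul_pow hn]

theorem circMat_det {n : ℕ} [NeZero n] (hn : 3 ≤ n) :
    (circMat n).det = -(-1) ^ n * (lucas n - 1 - (-1) ^ n) := by
  have hζ := Complex.isPrimitiveRoot_exp n (NeZero.ne n)
  have hsum : (Real.goldenRatio : ℂ) + Real.goldenConj = 1 := by
    exact_mod_cast Real.goldenRatio_add_goldenConj
  have hprod : (Real.goldenRatio : ℂ) * Real.goldenConj = -1 := by
    exact_mod_cast Real.goldenRatio_mul_goldenConj
  exact_mod_cast (circMat_det_eq_prod hn hζ).trans (hζ.prod_one_add_sub_sq hsum hprod)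

/-- The determinant of the circulant matrix of p(x) = 1 + x − x² equals the
product of p(ω) over the n-th roots of unity, and equals ±(Lₙ − 1 − (−1)ⁿ). -/
theorem circulant_det_lucas (n : ℕ) [NeZero n] (hn : 3 ≤ n) :
    (∀ ζ : ℂ, IsPrimitiveRoot ζ n →
      ((circMat n).det : ℂ) = ∏ k : Fin n, (1 + ζ ^ (k : ℕ) - (ζ ^ (k : ℕ)) ^ 2)) ∧
    ((circMat n).det = lucas n - 1 - (-1) ^ n ∨
      (circMat n).det = -(lucas n - 1 - (-1) ^ n)) := by
  refine ⟨fun ζ hζ => circMat_det_eq_prod hn hζ, ?_⟩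
  rcases neg_one_pow_eq_or ℤ n with h | h <;> simp [circMat_det hn, h]
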